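/- For all ML-formulas φ₁,…,φₙ,ψ, every Kripke model K, and every team T of K: K,T ⊨ =(φ₁,…,φₙ,ψ) if and only if K,T satisfies the ML(⊻)-formula ⋁_{a₁,…,aₙ ∈ {⊥,⊤}} (φ₁^{a₁} ∧ … ∧ φₙ^{aₙ} ∧ (ψ ⊻ ψ^⊥)), where the big ∨ is the splitting disjunction over all 2ⁿ sign tuples, φ^⊤ = φ, and φ^⊥ is the negation normal form of ¬φ. -/

import Mathlib

/-- A Kripke model over a (nonempty) type `W` of worlds: an accessibility
relation `R` and a valuation `V`. -/
structure Kripke (W : Type) where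
  R : W → W → Prop
  V : ℕ → Set W

/-- The image team `R[T] = {w | ∃ v ∈ T, v R w}`. -/
def Kripke.img {W : Type} (K : Kripke W) (T : Set W) : Set W :=
  {w | ∃ v ∈ T, K.R v w}

/-- `T[R]S`: every world of `T` has an `R`-successor in `S` and every world of
`S` has an `R`-predecessor in `T`. -/
def Kripke.step {W : Type} (K : Kripke W) (T S : Set W) : Prop :=
  (∀ w ∈ T, ∃ v ∈ S, K.R w v) ∧ (∀ v ∈ S, ∃ w ∈ T, K.R w v)

/-- Formulas of modal logic `ML` in negation normal form. -/
inductive MLForm : Type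
  | pos : ℕ → MLForm
  | neg : ℕ → MLForm
  | and : MLForm → MLForm → MLForm
  | or  : MLForm → MLForm → MLForm
  | dia : MLForm → MLForm
  | box : MLForm → MLForm

/-- Team semantics for `ML`. A team is a set of worlds. -/
def MLSat {W : Type} (K : Kripke W) : Set W → MLForm → Prop
  | T, .pos p => T ⊆ K.V p
  | T, .neg p => T ∩ K.V p = ∅
  | T, .and φ ψ => MLSat K T φ ∧ MLSat K T ψ
  | T, .or φ ψ => ∃ T₁ T₂, T₁ ∪ T₂ = T ∧ MLSat K T₁ φ ∧ MLSat K T₂ ψ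
  | T, .dia φ => ∃ T', K.step T T' ∧ MLSat K T' φ
  | T, .box φ => MLSat K (K.img T) φ

/-- Formulas of `ML(⊻)`: modal logic in negation normal form extended with
intuitionistic disjunction `⊻` (`idis`). -/
inductive MLIForm : Type
  | pos : ℕ → MLIForm
  | neg : ℕ → MLIForm
  | and : MLIForm → MLIForm → MLIForm
  | or  : MLIForm → MLIForm → MLIForm
  | dia : MLIForm → MLIForm
  | box : MLIForm → MLIForm
  | idis : MLIForm → MLIForm → MLIForm

/-- Team semantics for `ML(⊻)`. -/
def MLISat {W : Type} (K : Kripke W) : Set W → MLIForm → Prop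
  | T, .pos p => T ⊆ K.V p
  | T, .neg p => T ∩ K.V p = ∅
  | T, .and φ ψ => MLISat K T φ ∧ MLISat K T ψ
  | T, .or φ ψ => ∃ T₁ T₂, T₁ ∪ T₂ = T ∧ MLISat K T₁ φ ∧ MLISat K T₂ ψ
  | T, .dia φ => ∃ T', K.step T T' ∧ MLISat K T' φ
  | T, .box φ => MLISat K (K.img T) φ
  | T, .idis φ ψ => MLISat K T φ ∨ MLISat K T ψ

/-- All tuples (lists) of `n` signs (Booleans), i.e. `{⊥,⊤}ⁿ`. -/
def allBLists : ℕ → List (List Bool)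
  | 0 => [[]]
  | n + 1 => (allBLists n).flatMap fun l => [true :: l, false :: l]

/-- `φ^⊥`: the negation normal form of `¬φ`, for an `ML`-formula `φ` in
negation normal form. -/
def MLForm.nnfNeg : MLForm → MLForm
  | .pos p => .neg p
  | .neg p => .pos p
  | .and φ ψ => .or φ.nnfNeg ψ.nnfNeg
  | .or φ ψ => .and φ.nnfNeg ψ.nnfNeg
  | .dia φ => .box φ.nnfNeg
  | .box φ => .dia φ.nnfNeg

/-- The embedding of `ML` into `ML(⊻)`. -/
def MLForm.toMLI : MLForm → MLIForm
  | .pos p => .pos p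
  | .neg p => .neg p
  | .and φ ψ => .and φ.toMLI ψ.toMLI
  | .or φ ψ => .or φ.toMLI ψ.toMLI
  | .dia φ => .dia φ.toMLI
  | .box φ => .box φ.toMLI

/-- `φ^a`: the formula `φ` if `a = ⊤` and `φ^⊥` if `a = ⊥`. -/
def mlLit (φ : MLForm) (a : Bool) : MLIForm :=
  if a then φ.toMLI else φ.nnfNeg.toMLI

/-- The conjunction `φ₁^{a₁} ∧ … ∧ φₙ^{aₙ} ∧ (ψ ⊻ ψ^⊥)`. -/
def mlDepConj (φs : List MLForm) (a : List Bool) (ψ : MLForm) : MLIForm :=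
  (List.zipWith mlLit φs a).foldr MLIForm.and
    (MLIForm.idis ψ.toMLI ψ.nnfNeg.toMLI)

/-- Big splitting disjunction `⋁` of a (nonempty) list of formulas. -/
def mlBigOr : List MLIForm → MLIForm
  | [] => .pos 0
  | [φ] => φ
  | φ :: ψ :: l => .or φ (mlBigOr (ψ :: l))

/-- The `ML(⊻)`-formula
`⋁_{a₁,…,aₙ ∈ {⊥,⊤}} (φ₁^{a₁} ∧ … ∧ φₙ^{aₙ} ∧ (ψ ⊻ ψ^⊥))`. -/
def mlDepTranslation (φs : List MLForm) (ψ : MLForm) : MLIForm :=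
  mlBigOr ((allBLists φs.length).map fun a => mlDepConj φs a ψ)

/-- Formulas of extended modal dependence logic `EMDL`: modal logic in
negation normal form extended with dependence atoms `=(φ₁,…,φₙ,ψ)` over
`ML`-formulas. -/
inductive EMDLForm : Type
  | pos : ℕ → EMDLForm
  | neg : ℕ → EMDLForm
  | and : EMDLForm → EMDLForm → EMDLForm
  | or  : EMDLForm → EMDLForm → EMDLForm
  | dia : EMDLForm → EMDLForm
  | box : EMDLForm → EMDLForm
  | dep : List MLForm → MLForm → EMDLForm

/-- Team semantics for `EMDL`. -/
def EMDLSat {W : Type} (K : Kripke W) : Set W → EMDLForm → Prop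
  | T, .pos p => T ⊆ K.V p
  | T, .neg p => T ∩ K.V p = ∅
  | T, .and φ ψ => EMDLSat K T φ ∧ EMDLSat K T ψ
  | T, .or φ ψ => ∃ T₁ T₂, T₁ ∪ T₂ = T ∧ EMDLSat K T₁ φ ∧ EMDLSat K T₂ ψ
  | T, .dia φ => ∃ T', K.step T T' ∧ EMDLSat K T' φ
  | T, .box φ => EMDLSat K (K.img T) φ
  | T, .dep φs ψ => ∀ w ∈ T, ∀ v ∈ T,
      (∀ χ ∈ φs, (MLSat K {w} χ ↔ MLSat K {v} χ)) →
      (MLSat K {w} ψ ↔ MLSat K {v} ψ)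

/-!
`ML` is flat: a team satisfies an `ML`-formula iff every world of it does, and `φ^⊥` holds at a
world iff `φ` fails there. Hence a team satisfies `φ₁^{a₁} ∧ … ∧ φₙ^{aₙ} ∧ (ψ ⊻ ψ^⊥)` iff all its
worlds have the sign vector `a` of truth values of `φ₁,…,φₙ` and agree on `ψ`. The dependence atom
says exactly that `T` is the union of its sign-vector classes and `ψ` is constant on each; since
the sign vectors are pairwise distinct, a splitting of `T` along the big disjunction is the same
thing as such a family of classes.
-/

section Flatness

variable {W : Type} (K : Kripke W)

def MLHolds : W → MLForm → Prop
  | w, .pos p => w ∈ K.V p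
  | w, .neg p => w ∉ K.V p
  | w, .and φ ψ => MLHolds w φ ∧ MLHolds w ψ
  | w, .or φ ψ => MLHolds w φ ∨ MLHolds w ψ
  | w, .dia φ => ∃ v, K.R w v ∧ MLHolds v φ
  | w, .box φ => ∀ v, K.R w v → MLHolds v φ

theorem mlSat_iff_forall_mlHolds (φ : MLForm) (T : Set W) :
    MLSat K T φ ↔ ∀ w ∈ T, MLHolds K w φ := by
  induction φ generalizing T with
  | pos p => rfl
  | neg p => simp [MLSat, MLHolds, Set.eq_empty_iff_forall_notMem]
  | and φ ψ ihφ ihψ => simp only [MLSat, MLHolds, ihφ, ihψ, ← forall_and]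
  | or φ ψ ihφ ihψ =>
    simp only [MLSat, ihφ, ihψ]
    constructor
    · rintro ⟨T₁, T₂, rfl, h₁, h₂⟩ w (hw | hw)
      exacts [Or.inl (h₁ w hw), Or.inr (h₂ w hw)]
    · intro h
      refine ⟨{w ∈ T | MLHolds K w φ}, {w ∈ T | MLHolds K w ψ}, ?_, fun w hw => hw.2,
        fun w hw => hw.2⟩
      ext w
      simp only [Set.mem_union, Set.mem_ofPred_eq, ← and_or_left]
      exact ⟨And.left, fun hw => ⟨hw, h w hw⟩⟩
  | dia φ ih =>
    simp only [MLSat, ih]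
    constructor
    · rintro ⟨T', ⟨hsucc, -⟩, h⟩ w hw
      obtain ⟨v, hv, hwv⟩ := hsucc w hw
      exact ⟨v, hwv, h v hv⟩
    · intro h
      refine ⟨{v | MLHolds K v φ ∧ ∃ w ∈ T, K.R w v}, ⟨?_, fun v hv => hv.2⟩, fun v hv => hv.1⟩
      intro w hw
      obtain ⟨v, hwv, hv⟩ := h w hw
      exact ⟨v, ⟨hv, w, hw, hwv⟩, hwv⟩
  | box φ ih =>
    simp only [MLSat, MLHolds, ih, Kripke.img]
    exact ⟨fun h w hw v hwv => h v ⟨w, hw, hwv⟩, fun h v ⟨w, hw, hwv⟩ => h w hw v hwv⟩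

theorem mlSat_singleton (φ : MLForm) (w : W) : MLSat K {w} φ ↔ MLHolds K w φ := by
  simp [mlSat_iff_forall_mlHolds]

theorem mlHolds_nnfNeg (φ : MLForm) (w : W) : MLHolds K w φ.nnfNeg ↔ ¬MLHolds K w φ := by
  induction φ generalizing w with
  | pos p | neg p => simp [MLForm.nnfNeg, MLHolds]
  | and φ ψ ihφ ihψ => simp only [MLForm.nnfNeg, MLHolds, ihφ, ihψ, not_and_or]
  | or φ ψ ihφ ihψ => simp only [MLForm.nnfNeg, MLHolds, ihφ, ihψ, not_or]
  | dia φ ih | box φ ih => simp [MLForm.nnfNeg, MLHolds, ih]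

theorem mlISat_toMLI (φ : MLForm) (T : Set W) : MLISat K T φ.toMLI ↔ MLSat K T φ := by
  induction φ generalizing T with
  | pos p | neg p => rfl
  | and φ ψ ihφ ihψ | or φ ψ ihφ ihψ => simp only [MLForm.toMLI, MLISat, MLSat, ihφ, ihψ]
  | dia φ ih | box φ ih => simp only [MLForm.toMLI, MLISat, MLSat, ih]

end Flatness

section DependenceAtom

open Classical

variable {W : Type} (K : Kripke W)

noncomputable def signVector (φs : List MLForm) (w : W) : List Bool :=
  φs.map fun φ => decide (MLHolds K w φ)

theorem signVector_eq_iff (φs : List MLForm) (w v : W) :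
    signVector K φs w = signVector K φs v ↔ ∀ φ ∈ φs, (MLHolds K w φ ↔ MLHolds K v φ) := by
  simp [signVector, List.map_inj_left]

theorem emdlSat_dep_iff (T : Set W) (φs : List MLForm) (ψ : MLForm) :
    EMDLSat K T (.dep φs ψ) ↔ ∀ w ∈ T, ∀ v ∈ T,
      signVector K φs w = signVector K φs v → (MLHolds K w ψ ↔ MLHolds K v ψ) := by
  simp only [EMDLSat, mlSat_singleton, signVector_eq_iff]

theorem mlISat_mlLit (φ : MLForm) (a : Bool) (S : Set W) :
    MLISat K S (mlLit φ a) ↔ ∀ w ∈ S, decide (MLHolds K w φ) = a := by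
  cases a <;> simp [mlLit, mlISat_toMLI, mlSat_iff_forall_mlHolds, mlHolds_nnfNeg]

theorem mlISat_mlDepConj (ψ : MLForm) (S : Set W) :
    ∀ (φs : List MLForm) (a : List Bool), a.length = φs.length →
      (MLISat K S (mlDepConj φs a ψ) ↔ (∀ w ∈ S, signVector K φs w = a) ∧
        ((∀ w ∈ S, MLHolds K w ψ) ∨ ∀ w ∈ S, ¬MLHolds K w ψ))
  | [], [], _ => by
    simp [mlDepConj, signVector, MLISat, mlISat_toMLI, mlSat_iff_forall_mlHolds, mlHolds_nnfNeg]
  | φ :: φs, b :: a, h => by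
    have ih := mlISat_mlDepConj ψ S φs a (Nat.succ_inj.mp h)
    simp only [mlDepConj, List.zipWith_cons_cons, List.foldr_cons] at ih ⊢
    simp only [MLISat, ih, mlISat_mlLit, signVector, List.map_cons, List.cons.injEq, forall_and,
      and_assoc]

end DependenceAtom

section SignVectors

theorem mem_allBLists {n : ℕ} {a : List Bool} : a ∈ allBLists n ↔ a.length = n := by
  induction n generalizing a with
  | zero => simp [allBLists]
  | succ n ih =>
    rcases a with _ | ⟨_ | _, a⟩ <;> simp [allBLists, ih]

theorem allBLists_ne_nil (n : ℕ) : allBLists n ≠ [] :=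
  List.ne_nil_of_mem (mem_allBLists.mpr (List.length_replicate (a := true)))

theorem allBLists_nodup (n : ℕ) : (allBLists n).Nodup := by
  induction n with
  | zero => simp [allBLists]
  | succ n ih =>
    refine List.nodup_flatMap.mpr ⟨fun l _ => by simp, ih.imp fun hne => ?_⟩
    simp [hne.symm]

end SignVectors

section BigDisjunction

variable {W : Type} (K : Kripke W)

theorem mlBigOr_cons (φ : MLIForm) {l : List MLIForm} (hl : l ≠ []) :
    mlBigOr (φ :: l) = .or φ (mlBigOr l) := by
  obtain ⟨ψ, l', rfl⟩ := List.exists_cons_of_ne_nil hl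
  rfl

theorem biUnion_list_cons {α β : Type} (b : α) (L : List α) (S : α → Set β) :
    (⋃ a ∈ b :: L, S a) = S b ∪ ⋃ a ∈ L, S a := by
  ext
  simp

/-- Distinctness of the indices is what lets the teams of a splitting be indexed by them. -/
theorem mlISat_mlBigOr_map {α : Type} [DecidableEq α] (g : α → MLIForm) :
    ∀ {L : List α}, L ≠ [] → L.Nodup → ∀ T : Set W,
      (MLISat K T (mlBigOr (L.map g)) ↔
        ∃ S : α → Set W, T = (⋃ a ∈ L, S a) ∧ ∀ a ∈ L, MLISat K (S a) (g a))
  | [], hL, _, _ => absurd rfl hL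
  | [b], _, _, T => by
    simp only [List.map_cons, List.map_nil, mlBigOr, List.mem_singleton,
      Set.iUnion_iUnion_eq_left, forall_eq]
    exact ⟨fun h => ⟨fun _ => T, rfl, h⟩, fun ⟨S, hT, hS⟩ => hT ▸ hS⟩
  | b :: c :: L, _, hnd, T => by
    obtain ⟨hb, hnd'⟩ := List.nodup_cons.mp hnd
    rw [List.map_cons, mlBigOr_cons _ (by simp)]
    simp only [MLISat, mlISat_mlBigOr_map g (List.cons_ne_nil c L) hnd']
    constructor
    · rintro ⟨T₁, _, rfl, h₁, S, rfl, hS⟩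
      have hS_eq : ∀ a ∈ c :: L, Function.update S b T₁ a = S a :=
        fun a ha => Function.update_of_ne (ne_of_mem_of_not_mem ha hb) _ _
      refine ⟨Function.update S b T₁, ?_, List.forall_mem_cons.mpr ⟨?_, ?_⟩⟩
      · rw [biUnion_list_cons b, Function.update_self, Set.iUnion₂_congr hS_eq]
      · rwa [Function.update_self]
      · exact fun a ha => hS_eq a ha ▸ hS a ha
    · rintro ⟨S, rfl, hS⟩
      obtain ⟨hSb, hS⟩ := List.forall_mem_cons.mp hS
      exact ⟨S b, _, (biUnion_list_cons b _ S).symm, hSb, S, rfl, hS⟩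

end BigDisjunction

theorem emdl_dep_translation_general {W : Type} (K : Kripke W)
    (T : Set W) (φs : List MLForm) (ψ : MLForm) :
    EMDLSat K T (.dep φs ψ) ↔ MLISat K T (mlDepTranslation φs ψ) := by
  rw [emdlSat_dep_iff, mlDepTranslation,
    mlISat_mlBigOr_map K _ (allBLists_ne_nil _) (allBLists_nodup _)]
  constructor
  · intro hdep
    refine ⟨fun a => {w ∈ T | signVector K φs w = a}, ?_, fun a ha => ?_⟩
    · ext w
      simp [mem_allBLists, signVector]
    rw [mlISat_mlDepConj K ψ _ φs a (mem_allBLists.mp ha)]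
    refine ⟨fun w hw => hw.2, or_iff_not_imp_left.mpr fun hnot => ?_⟩
    obtain ⟨w, hw, hwψ⟩ := not_forall₂.mp hnot
    exact fun v hv hvψ => hwψ ((hdep w hw.1 v hv.1 (hw.2.trans hv.2.symm)).mpr hvψ)
  · rintro ⟨S, rfl, hS⟩ w hw v hv hwv
    simp only [Set.mem_iUnion] at hw hv
    obtain ⟨a, ha, hwa⟩ := hw
    obtain ⟨b, hb, hvb⟩ := hv
    obtain ⟨haS, hψ⟩ := (mlISat_mlDepConj K ψ _ φs a (mem_allBLists.mp ha)).mp (hS a ha)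
    obtain ⟨hbS, -⟩ := (mlISat_mlDepConj K ψ _ φs b (mem_allBLists.mp hb)).mp (hS b hb)
    obtain rfl : a = b := (haS w hwa).symm.trans (hwv.trans (hbS v hvb))
    rcases hψ with hψ | hψ
    · exact iff_of_true (hψ w hwa) (hψ v hvb)
    · exact iff_of_false (hψ w hwa) (hψ v hvb)

/-- `K,T` satisfies the extended modal dependence atom
`=(φ₁,…,φₙ,ψ)` iff it satisfies the `ML(⊻)`-formula
`⋁_{a₁,…,aₙ ∈ {⊥,⊤}} (φ₁^{a₁} ∧ … ∧ φₙ^{aₙ} ∧ (ψ ⊻ ψ^⊥))`. -/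
theorem emdl_dep_translation {W : Type} [Nonempty W] (K : Kripke W)
    (T : Set W) (φs : List MLForm) (ψ : MLForm) :
    EMDLSat K T (.dep φs ψ) ↔ MLISat K T (mlDepTranslation φs ψ) :=
  emdl_dep_translation_general K T φs ψ
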